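/- arXiv:2507.18819 — 2 statements merged into one kernel-verified Lean document; each statement's English description precedes it below -/
import Mathlib

section
/- For every n ∈ ℕ and every m ∈ ℕ with m < n, ∫_{−1}^{1} x^m · q_n(x) dx = 0; that is, the n-th Rodrigues (Legendre) polynomial is orthogonal on [−1, 1] to every polynomial of degree strictly less than n. -/
/-!
Write `q_n = P^{(n)}` with `P = (X² − 1)ⁿ`. Since `±1` are roots of multiplicity `n` of `P`,
every derivative `P^{(j)}` with `j < n` vanishes at both endpoints, so each integration by parts
in `∫ u · P^{(n)}` moves one derivative onto `u` without boundary terms. After `n` steps the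
integrand contains `u^{(n)}`, which is zero for `u = xᵐ` with `m < n`.
-/

/-- The (unnormalized) Rodrigues polynomial `q_n(x) = dⁿ/dxⁿ[(x² − 1)ⁿ]`. -/
noncomputable def rodrigues (n : ℕ) : ℝ → ℝ :=
  iteratedDeriv n (fun x : ℝ => (x ^ 2 - 1) ^ n)

open Polynomial

theorem Polynomial.iteratedDeriv_eval {𝕜 : Type*} [NontriviallyNormedField 𝕜] (p : 𝕜[X])
    (k : ℕ) : iteratedDeriv k (fun x => p.eval x) = fun x => (derivative^[k] p).eval x := by
  induction k with
  | zero => simp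
  | succ k ih =>
    funext x
    rw [iteratedDeriv_succ, ih, Function.iterate_succ_apply']
    exact Polynomial.deriv _

theorem Polynomial.isRoot_iterate_derivative_pow {R : Type*} [CommSemiring R] {p : R[X]} {a : R}
    (ha : p.IsRoot a) {n k : ℕ} (hk : k < n) : (derivative^[k] (p ^ n)).IsRoot a := by
  have hdvd : p ∣ derivative^[k] (p ^ n) :=
    (dvd_pow_self p (Nat.sub_ne_zero_of_lt hk)).trans (pow_sub_dvd_iterate_derivative_pow p n k)
  obtain ⟨r, hr⟩ := hdvd
  simp [hr, ha.eq_zero]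

theorem Polynomial.integral_eval_mul_eval_derivative {a b : ℝ} (u q : ℝ[X])
    (ha : q.IsRoot a) (hb : q.IsRoot b) :
    ∫ x in a..b, u.eval x * (derivative q).eval x
      = -∫ x in a..b, (derivative u).eval x * q.eval x := by
  rw [intervalIntegral.integral_mul_deriv_eq_deriv_mul (fun x _ => u.hasDerivAt x)
    (fun x _ => q.hasDerivAt x) ((Polynomial.continuous _).intervalIntegrable _ _)
    ((Polynomial.continuous _).intervalIntegrable _ _), ha.eq_zero, hb.eq_zero]
  simp

theorem Polynomial.integral_eval_mul_eval_iterate_derivative_eq_zero {a b : ℝ} (p : ℝ[X])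
    {k : ℕ} (hp : ∀ j < k, (derivative^[j] p).IsRoot a ∧ (derivative^[j] p).IsRoot b)
    (u : ℝ[X]) (hu : derivative^[k] u = 0) :
    ∫ x in a..b, u.eval x * (derivative^[k] p).eval x = 0 := by
  induction k generalizing u with
  | zero => simp_all
  | succ k ih =>
    obtain ⟨ha, hb⟩ := hp k k.lt_succ_self
    rw [Function.iterate_succ_apply', integral_eval_mul_eval_derivative u _ ha hb, neg_eq_zero]
    exact ih (fun j hj => hp j (hj.trans k.lt_succ_self)) (derivative u)
      (by rwa [← Function.iterate_succ_apply])

/-- The Rodrigues (Legendre) polynomial `q_n` is orthogonal on `[−1, 1]` to every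
monomial `x^m` with `m < n`. -/
theorem rodrigues_orthogonal (n m : ℕ) (hmn : m < n) :
    ∫ x in (-1 : ℝ)..1, x ^ m * rodrigues n x = 0 := by
  have hP : rodrigues n = fun x => (derivative^[n] (((X : ℝ[X]) ^ 2 - 1) ^ n)).eval x := by
    rw [rodrigues, ← iteratedDeriv_eval]
    simp
  have hroots : ∀ j < n, (derivative^[j] (((X : ℝ[X]) ^ 2 - 1) ^ n)).IsRoot (-1) ∧
      (derivative^[j] (((X : ℝ[X]) ^ 2 - 1) ^ n)).IsRoot 1 := fun j hj =>
    ⟨isRoot_iterate_derivative_pow (by simp) hj, isRoot_iterate_derivative_pow (by simp) hj⟩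
  have hxm : derivative^[n] ((X : ℝ[X]) ^ m) = 0 :=
    iterate_derivative_eq_zero ((natDegree_X_pow_le m).trans_lt hmn)
  simpa [hP] using integral_eval_mul_eval_iterate_derivative_eq_zero _ hroots _ hxm
end

section
/- Let n ≥ 1 and let ξ_1, …, ξ_n ∈ (−1, 1) be the n distinct roots of the Rodrigues polynomial q_n. Then there exist weights w_1, …, w_n ∈ ℝ such that for every real polynomial f of degree at most 2n − 1, ∫_{−1}^{1} f(x) dx = ∑_{i=1}^{n} w_i f(ξ_i). (Exactness of n-point Gauss–Legendre quadrature for polynomials of degree up to 2n − 1.) -/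
open Finset

/-!
Write `f = r + N g` with `N = ∏ (X - ξ_i)` the nodal polynomial and `deg r, deg g < n`.
The rule with weights `w_i = ∫ ℓ_i` (`ℓ_i` the Lagrange basis) integrates `r` exactly, since
`r` is its own interpolant, and agrees with `f` at the nodes. It remains that `∫ N g = 0`:
`N` is a nonzero multiple of `q_n`, both having degree `n` and vanishing at the `ξ_i`, and `q_n`
is orthogonal to all polynomials of degree `< n` by `n` integrations by parts, whose boundary
terms vanish because `(x² − 1)ⁿ` has zeros of order `n` at `±1`.
-/

open Polynomial

namespace Polynomial

theorem iterate_derivative_ne_zero {R : Type*} [Semiring R] [NoZeroDivisors R] [CharZero R]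
    {p : R[X]} {k : ℕ} (hp : p ≠ 0) (hk : k ≤ p.natDegree) : derivative^[k] p ≠ 0 := by
  intro h
  have hcoeff := congrArg (coeff · (p.natDegree - k)) h
  simp only [coeff_iterate_derivative, Nat.sub_add_cancel hk, coeff_zero, nsmul_eq_mul] at hcoeff
  rcases mul_eq_zero.mp hcoeff with h0 | h0
  · exact (Nat.descFactorial_eq_zero_iff_lt.not.mpr (by omega)) (Nat.cast_eq_zero.mp h0)
  · exact leadingCoeff_ne_zero.mpr hp h0

theorem eval_iterate_derivative_eq_zero_of_pow_dvd {R : Type*} [CommRing R] {p : R[X]} {a : R}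
    {n k : ℕ} (hdvd : (X - C a) ^ n ∣ p) (hk : k < n) : (derivative^[k] p).eval a = 0 :=
  dvd_iff_isRoot.mp <| (dvd_pow_self _ (Nat.sub_ne_zero_of_lt hk)).trans
    (pow_sub_dvd_iterate_derivative_of_pow_dvd k hdvd)

theorem iteratedDeriv_eval_s14 {𝕜 : Type*} [NontriviallyNormedField 𝕜] (p : 𝕜[X]) (k : ℕ) :
    iteratedDeriv k (fun x => p.eval x) = fun x => (derivative^[k] p).eval x := by
  induction k with
  | zero => simp
  | succ k ih =>
    funext x
    rw [iteratedDeriv_succ, ih, Function.iterate_succ_apply']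
    exact ((derivative^[k] p).hasDerivAt x).deriv

theorem integral_eval_derivative_mul (p q : ℝ[X]) (a b : ℝ) :
    ∫ x in a..b, p.derivative.eval x * q.eval x
      = p.eval b * q.eval b - p.eval a * q.eval a
        - ∫ x in a..b, p.eval x * q.derivative.eval x := by
  have h := intervalIntegral.integral_deriv_mul_eq_sub (fun x _ => p.hasDerivAt x)
    (fun x _ => q.hasDerivAt x) (p.derivative.continuous.intervalIntegrable a b)
    (q.derivative.continuous.intervalIntegrable a b)
  rw [intervalIntegral.integral_add (Continuous.intervalIntegrable (by fun_prop) _ _)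
    (Continuous.intervalIntegrable (by fun_prop) _ _)] at h
  linarith

section Orthogonality

variable {p : ℝ[X]} {a b : ℝ} {n : ℕ}

theorem integral_eval_iterate_derivative_mul (ha : (X - C a) ^ n ∣ p) (hb : (X - C b) ^ n ∣ p)
    {j : ℕ} (hj : j ≤ n) (q : ℝ[X]) :
    ∫ x in a..b, (derivative^[j] p).eval x * q.eval x
      = (-1) ^ j * ∫ x in a..b, p.eval x * (derivative^[j] q).eval x := by
  induction j generalizing q with
  | zero => simp
  | succ j ih =>
    have hjn : j < n := by omega
    rw [Function.iterate_succ_apply', integral_eval_derivative_mul,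
      eval_iterate_derivative_eq_zero_of_pow_dvd ha hjn,
      eval_iterate_derivative_eq_zero_of_pow_dvd hb hjn, ih hjn.le, ← Function.iterate_succ_apply]
    ring

theorem integral_eval_iterate_derivative_mul_eq_zero (ha : (X - C a) ^ n ∣ p)
    (hb : (X - C b) ^ n ∣ p) {q : ℝ[X]} (hq : q.natDegree < n) :
    ∫ x in a..b, (derivative^[n] p).eval x * q.eval x = 0 := by
  rw [integral_eval_iterate_derivative_mul ha hb le_rfl, iterate_derivative_eq_zero hq]
  simp

end Orthogonality

theorem monic_X_sq_sub_one_pow {R : Type*} [CommRing R] (n : ℕ) :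
    (((X : R[X]) ^ 2 - 1) ^ n).Monic := by
  simpa using (monic_X_pow_sub_C (1 : R) two_ne_zero).pow n

theorem natDegree_X_sq_sub_one_pow {R : Type*} [CommRing R] [Nontrivial R] (n : ℕ) :
    (((X : R[X]) ^ 2 - 1) ^ n).natDegree = 2 * n := by
  rw [← C_1, (monic_X_pow_sub_C (1 : R) two_ne_zero).natDegree_pow, natDegree_X_pow_sub_C,
    mul_comm]

noncomputable def intervalIntegralₗ (a b : ℝ) : ℝ[X] →ₗ[ℝ] ℝ where
  toFun p := ∫ x in a..b, p.eval x
  map_add' p q := by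
    simp only [eval_add]
    exact intervalIntegral.integral_add (p.continuous.intervalIntegrable _ _)
      (q.continuous.intervalIntegrable _ _)
  map_smul' c p := by
    simp only [eval_smul, smul_eq_mul, RingHom.id_apply]
    exact intervalIntegral.integral_const_mul c _

end Polynomial

namespace Lagrange

variable {F ι : Type*} [Field F] {s : Finset ι} {v : ι → F}

theorem eq_C_leadingCoeff_mul_nodal {p : F[X]} (hvs : Set.InjOn v s)
    (hdeg : p.natDegree ≤ #s) (hroot : ∀ i ∈ s, p.eval (v i) = 0) :
    p = C p.leadingCoeff * nodal s v := by
  obtain ⟨q, rfl⟩ : nodal s v ∣ p := by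
    refine Finset.prod_dvd_of_coprime (fun i hi j hj hij => ?_) fun i hi => ?_
    · exact isCoprime_X_sub_C_of_isUnit_sub (sub_ne_zero.mpr fun h => hij (hvs hi hj h)).isUnit
    · exact dvd_iff_isRoot.mpr (hroot i hi)
  rcases eq_or_ne q 0 with rfl | hq
  · simp
  have hq0 : q.natDegree = 0 := by
    rw [natDegree_mul nodal_ne_zero hq, natDegree_nodal] at hdeg
    omega
  rw [eq_C_of_natDegree_eq_zero hq0, leadingCoeff_mul, nodal_monic.leadingCoeff, leadingCoeff_C,
    one_mul, mul_comm]

variable [DecidableEq ι]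

theorem map_eq_sum_map_basis_mul_eval (L : F[X] →ₗ[F] F) (hvs : Set.InjOn v s)
    (horth : ∀ g : F[X], g.natDegree < #s → L (nodal s v * g) = 0) {f : F[X]}
    (hf : f.natDegree < 2 * #s) :
    L f = ∑ i ∈ s, L (Lagrange.basis s v i) * f.eval (v i) := by
  have hdiv := modByMonic_add_div f (nodal s v)
  have hnodes : ∀ i ∈ s, (f %ₘ nodal s v).eval (v i) = f.eval (v i) := fun i hi => by
    conv_rhs => rw [← hdiv]
    rw [eval_add, eval_mul, eval_nodal_at_node hi, zero_mul, add_zero]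
  have hrem : (f %ₘ nodal s v).degree < #s := by
    simpa only [degree_nodal] using degree_modByMonic_lt f (nodal_monic (s := s) (v := v))
  have hinterp : f %ₘ nodal s v = interpolate s v fun i => f.eval (v i) :=
    (eq_interpolate hvs hrem).trans (interpolate_eq_of_values_eq_on _ _ hnodes)
  have hquot : L (nodal s v * (f /ₘ nodal s v)) = 0 :=
    horth _ (by rw [natDegree_divByMonic _ nodal_monic, natDegree_nodal]; omega)
  calc L f = L (f %ₘ nodal s v) := by
        conv_lhs => rw [← hdiv]
        rw [map_add, hquot, add_zero]
    _ = ∑ i ∈ s, L (Lagrange.basis s v i) * f.eval (v i) := by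
        rw [hinterp, interpolate_apply, map_sum]
        refine Finset.sum_congr rfl fun i _ => ?_
        rw [← smul_eq_C_mul, map_smul, smul_eq_mul, mul_comm]

theorem map_eq_sum_map_basis_mul_eval_of_orthogonal (L : F[X] →ₗ[F] F) (hvs : Set.InjOn v s)
    {Q : F[X]} (hQ : Q ≠ 0) (hdeg : Q.natDegree ≤ #s) (hroot : ∀ i ∈ s, Q.eval (v i) = 0)
    (horth : ∀ g : F[X], g.natDegree < #s → L (Q * g) = 0) {f : F[X]}
    (hf : f.natDegree < 2 * #s) :
    L f = ∑ i ∈ s, L (Lagrange.basis s v i) * f.eval (v i) := by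
  refine map_eq_sum_map_basis_mul_eval L hvs (fun g hg => ?_) hf
  obtain ⟨c, hc, rfl⟩ : ∃ c ≠ 0, Q = C c * nodal s v :=
    ⟨_, leadingCoeff_ne_zero.mpr hQ, eq_C_leadingCoeff_mul_nodal hvs hdeg hroot⟩
  have hrescale : nodal s v * g = C c * nodal s v * (C c⁻¹ * g) := by
    rw [mul_mul_mul_comm, ← C_mul, mul_inv_cancel₀ hc, C_1, one_mul]
  rw [hrescale]
  exact horth _ ((natDegree_C_mul_le _ _).trans_lt hg)

end Lagrange

noncomputable def rodriguesPoly (n : ℕ) : ℝ[X] := derivative^[n] ((X ^ 2 - 1) ^ n)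

theorem rodrigues_eq_eval (n : ℕ) (x : ℝ) : rodrigues n x = (rodriguesPoly n).eval x := by
  have h : (fun x : ℝ => (x ^ 2 - 1) ^ n) = fun x => (((X : ℝ[X]) ^ 2 - 1) ^ n).eval x := by
    simp
  rw [rodrigues, h, iteratedDeriv_eval_s14, rodriguesPoly]

theorem rodriguesPoly_ne_zero (n : ℕ) : rodriguesPoly n ≠ 0 :=
  iterate_derivative_ne_zero (monic_X_sq_sub_one_pow n).ne_zero (by
    rw [natDegree_X_sq_sub_one_pow]; omega)

theorem natDegree_rodriguesPoly_le (n : ℕ) : (rodriguesPoly n).natDegree ≤ n :=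
  (natDegree_iterate_derivative _ n).trans (by rw [natDegree_X_sq_sub_one_pow]; omega)

theorem integral_rodriguesPoly_mul_eq_zero {n : ℕ} {q : ℝ[X]} (hq : q.natDegree < n) :
    ∫ x in (-1 : ℝ)..1, (rodriguesPoly n).eval x * q.eval x = 0 := by
  have hfactor : (X : ℝ[X]) ^ 2 - 1 = (X - C (-1)) * (X - C 1) := by
    simp only [map_neg, map_one]
    ring
  rw [rodriguesPoly, hfactor, mul_pow]
  exact integral_eval_iterate_derivative_mul_eq_zero (dvd_mul_right _ _) (dvd_mul_left _ _) hq

theorem gauss_legendre_exactness_general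
    (n : ℕ) (hn : 1 ≤ n) (ξ : Fin n → ℝ) (hmono : StrictMono ξ)
    (hroot : ∀ i, rodrigues n (ξ i) = 0) :
    ∃ w : Fin n → ℝ, ∀ f : Polynomial ℝ, f.natDegree ≤ 2 * n - 1 →
      ∫ x in (-1 : ℝ)..1, f.eval x = ∑ i, w i * f.eval (ξ i) := by
  refine ⟨fun i => ∫ x in (-1 : ℝ)..1, (Lagrange.basis univ ξ i).eval x, fun f hf => ?_⟩
  refine Lagrange.map_eq_sum_map_basis_mul_eval_of_orthogonal (intervalIntegralₗ (-1) 1)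
    hmono.injective.injOn (rodriguesPoly_ne_zero n) ?_ ?_ ?_ ?_
  · simpa using natDegree_rodriguesPoly_le n
  · exact fun i _ => by rw [← rodrigues_eq_eval, hroot i]
  · intro g hg
    simp only [card_univ, Fintype.card_fin] at hg
    simpa [intervalIntegralₗ] using integral_rodriguesPoly_mul_eq_zero hg
  · simp only [card_univ, Fintype.card_fin]
    omega

/-- Exactness of `n`-point Gauss–Legendre quadrature: if `ξ_1 < ⋯ < ξ_n` are the `n`
distinct roots of the Rodrigues polynomial `q_n` in `(−1, 1)`, then there exist weights
`w_i` such that `∫_{−1}^{1} f = ∑ w_i f(ξ_i)` for every polynomial `f` of degree at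
most `2n − 1`. -/
theorem gauss_legendre_exactness
    (n : ℕ) (hn : 1 ≤ n) (ξ : Fin n → ℝ) (hmono : StrictMono ξ)
    (hmem : ∀ i, ξ i ∈ Set.Ioo (-1 : ℝ) 1)
    (hroot : ∀ i, rodrigues n (ξ i) = 0) :
    ∃ w : Fin n → ℝ, ∀ f : Polynomial ℝ, f.natDegree ≤ 2 * n - 1 →
      ∫ x in (-1 : ℝ)..1, f.eval x = ∑ i, w i * f.eval (ξ i) :=
  gauss_legendre_exactness_general n hn ξ hmono hroot
end
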